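/- Let X be a càdlàg function, c > 0, and assume T_d^{2c}X ≥ T_u^{2c}X. Define X^c by: X^c(s) = X(0) on [0, T_{u,0}); X^c(s) = sup_{t∈[T_{u,k}, s]} X(t) − c on [T_{u,k}, T_{d,k}); X^c(s) = inf_{t∈[T_{d,k}, s]} X(t) + c on [T_{d,k}, T_{u,k+1}). Then for every s ≥ 0, |X(s) − X^c(s)| ≤ c. -/

import Mathlib

/-!
On each interval of the construction the stopping rule that ends it has not fired by time `s`.
Before `T_{u,0} ≤ T_d` both `sup X - X 0` and `X 0 - inf X` are at most `c`; on
`[T_{u,k}, T_{d,k})` the drop from the running maximum is at most `2c`; on `[T_{d,k}, T_{u,k+1})`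
the rise over the running minimum is at most `2c`. Each of these gives `|X - X^c| ≤ c`.
It remains to see that every `s` lies in one of the intervals, i.e. that the up-times do not
accumulate: right continuity gives `T_{d,k} < T_{u,k+1}`, and on `[T_{u,k}, T_{d,k}]` the function
drops by more than `2c`, which cannot happen arbitrarily close to the left of a point where `X`
has a left limit.
-/

open Set Filter MeasureTheory
open scoped ENNReal NNReal Topology

noncomputable section

/-- A function is càdlàg: right-continuous with left limits. -/
def Cadlag (f : ℝ → ℝ) : Prop :=
  (∀ t : ℝ, Tendsto f (nhdsWithin t (Ici t)) (nhds (f t))) ∧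
  (∀ t : ℝ, ∃ l : ℝ, Tendsto f (nhdsWithin t (Iio t)) (nhds l))

/-- Jump of `f` at `s`. -/
def jumpAt (f : ℝ → ℝ) (s : ℝ) : ℝ := f s - Function.leftLim f s

def supOn (f : ℝ → ℝ) (a b : ℝ) : ℝ := sSup (f '' Icc a b)
def infOn (f : ℝ → ℝ) (a b : ℝ) : ℝ := sInf (f '' Icc a b)

def TuZero (X : ℝ → ℝ) (c : ℝ) : ℝ≥0∞ :=
  sInf {u | ∃ s : ℝ, 0 ≤ s ∧ u = ENNReal.ofReal s ∧ supOn X 0 s - X 0 > c}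

def TdIni (X : ℝ → ℝ) (c : ℝ) : ℝ≥0∞ :=
  sInf {u | ∃ s : ℝ, 0 ≤ s ∧ u = ENNReal.ofReal s ∧ X 0 - infOn X 0 s > c}

def nextTd (X : ℝ → ℝ) (c : ℝ) (a : ℝ≥0∞) : ℝ≥0∞ :=
  sInf {u | ∃ s : ℝ, 0 ≤ s ∧ a ≤ ENNReal.ofReal s ∧ u = ENNReal.ofReal s ∧
    supOn X a.toReal s - X s > 2 * c}

def nextTu (X : ℝ → ℝ) (c : ℝ) (a : ℝ≥0∞) : ℝ≥0∞ :=
  sInf {u | ∃ s : ℝ, 0 ≤ s ∧ a ≤ ENNReal.ofReal s ∧ u = ENNReal.ofReal s ∧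
    X s - infOn X a.toReal s > 2 * c}

def TuTd (X : ℝ → ℝ) (c : ℝ) : ℕ → ℝ≥0∞ × ℝ≥0∞
  | 0 => (TuZero X c, nextTd X c (TuZero X c))
  | (n + 1) =>
      let tu := nextTu X c (TuTd X c n).2
      (tu, nextTd X c tu)

def Tu (X : ℝ → ℝ) (c : ℝ) (n : ℕ) : ℝ≥0∞ := (TuTd X c n).1
def Td (X : ℝ → ℝ) (c : ℝ) (n : ℕ) : ℝ≥0∞ := (TuTd X c n).2

open Classical in
/-- The finite variation approximation `X^c` from the paper's construction. -/
def Xc (X : ℝ → ℝ) (c : ℝ) (s : ℝ) : ℝ :=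
  if ENNReal.ofReal s < Tu X c 0 then X 0
  else if h : ∃ k, Tu X c k ≤ ENNReal.ofReal s ∧ ENNReal.ofReal s < Td X c k then
    supOn X (Tu X c (Nat.find h)).toReal s - c
  else if h' : ∃ k, Td X c k ≤ ENNReal.ofReal s ∧ ENNReal.ofReal s < Tu X c (k + 1) then
    infOn X (Td X c (Nat.find h')).toReal s + c
  else 0

/-- Truncated variation at level `c` on `[0, T]`. -/
def TVtrunc (f : ℝ → ℝ) (c T : ℝ) : ℝ≥0∞ :=
  ⨆ (n : ℕ) (t : ℕ → ℝ) (_ : Monotone t) (_ : ∀ i, t i ∈ Icc (0 : ℝ) T),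
    ∑ i ∈ Finset.range n, ENNReal.ofReal (|f (t (i + 1)) - f (t i)| - c)

/-- Upward truncated variation at level `c` on `[0, T]`. -/
def UTVtrunc (f : ℝ → ℝ) (c T : ℝ) : ℝ≥0∞ :=
  ⨆ (n : ℕ) (t : ℕ → ℝ) (_ : Monotone t) (_ : ∀ i, t i ∈ Icc (0 : ℝ) T),
    ∑ i ∈ Finset.range n, ENNReal.ofReal (f (t (i + 1)) - f (t i) - c)

/-- Downward truncated variation at level `c` on `[0, T]`. -/
def DTVtrunc (f : ℝ → ℝ) (c T : ℝ) : ℝ≥0∞ :=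
  ⨆ (n : ℕ) (t : ℕ → ℝ) (_ : Monotone t) (_ : ∀ i, t i ∈ Icc (0 : ℝ) T),
    ∑ i ∈ Finset.range n, ENNReal.ofReal (f (t i) - f (t (i + 1)) - c)

/-- Left-endpoint Riemann–Stieltjes sum of `f` against `g` over the dyadic
partition of `[0, t]` with `2 ^ n` pieces. -/
def RSsum (f g : ℝ → ℝ) (t : ℝ) (n : ℕ) : ℝ :=
  ∑ i ∈ Finset.range (2 ^ n),
    f (t * i / 2 ^ n) * (g (t * (i + 1) / 2 ^ n) - g (t * i / 2 ^ n))

/-- Pathwise Lebesgue–Stieltjes integral `∫_0^t f_- dg`, realized as the limit of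
left-endpoint Riemann–Stieltjes sums along dyadic partitions. -/
def LSint (f g : ℝ → ℝ) (t : ℝ) : ℝ := limUnder atTop (fun n => RSsum f g t n)

/-- Discrete covariation sums along dyadic partitions. -/
def QVsum (f g : ℝ → ℝ) (t : ℝ) (n : ℕ) : ℝ :=
  ∑ i ∈ Finset.range (2 ^ n),
    (f (t * (i + 1) / 2 ^ n) - f (t * i / 2 ^ n)) *
      (g (t * (i + 1) / 2 ^ n) - g (t * i / 2 ^ n))

/-- Sum of products of jumps `∑_{0 < s ≤ t} Δf Δg`. -/
def jumpSum (f g : ℝ → ℝ) (t : ℝ) : ℝ :=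
  ∑' s : ℝ, Set.indicator (Ioc (0 : ℝ) t) (fun u => jumpAt f u * jumpAt g u) s

/-- A local martingale: there is a localizing sequence of stopping times. -/
def IsLocalMartingale {Ω : Type*} [m : MeasurableSpace Ω] (F : Filtration ℝ m)
    (P : Measure Ω) (M : ℝ → Ω → ℝ) : Prop :=
  ∃ τ : ℕ → Ω → ℝ, (∀ n, IsStoppingTime F (fun ω => ((τ n ω : ℝ) : WithTop ℝ))) ∧
    (∀ ω, Tendsto (fun n => τ n ω) atTop atTop) ∧
    ∀ n, Martingale (stoppedProcess M (fun ω => ((τ n ω : ℝ) : WithTop ℝ))) F P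

/-- A (càdlàg) semimartingale: adapted, càdlàg, and decomposable as a local
martingale plus an adapted càdlàg process of locally finite variation. -/
def IsSemimartingale {Ω : Type*} [m : MeasurableSpace Ω] (F : Filtration ℝ m)
    (P : Measure Ω) (X : ℝ → Ω → ℝ) : Prop :=
  Adapted F X ∧ (∀ ω, Cadlag fun t => X t ω) ∧
  ∃ M A : ℝ → Ω → ℝ, (∀ t ω, X t ω = M t ω + A t ω) ∧
    IsLocalMartingale F P M ∧ Adapted F A ∧ (∀ ω, Cadlag fun t => A t ω) ∧
    (∀ ω, ∀ T > (0 : ℝ), eVariationOn (fun t => A t ω) (Icc 0 T) < ⊤)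

/-- The filtration satisfies the usual hypotheses w.r.t. `P`:
right-continuity and completeness. -/
def UsualConditions {Ω : Type*} [m : MeasurableSpace Ω] (F : Filtration ℝ m)
    (P : Measure Ω) : Prop :=
  (∀ t : ℝ, F t = ⨅ (s : ℝ) (_ : t < s), F s) ∧
  (∀ t : ℝ, ∀ s : Set Ω, P s = 0 → MeasurableSet[F t] s)

/-- Uniform convergence on compacts in probability, as `c ↓ 0`. -/
def UCP {Ω : Type*} [m : MeasurableSpace Ω] (P : Measure Ω)
    (Fc : ℝ → ℝ → Ω → ℝ) (G : ℝ → Ω → ℝ) : Prop :=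
  ∀ T > (0 : ℝ), ∀ ε > (0 : ℝ),
    Tendsto (fun c => P {ω | ε ≤ ⨆ t : Icc (0 : ℝ) T, |Fc c t ω - G t ω|})
      (nhdsWithin 0 (Ioi 0)) (nhds 0)

/-- Standard Brownian motion started at `0`. -/
def IsStandardBM {Ω : Type*} [m : MeasurableSpace Ω] (P : Measure Ω)
    (B : ℝ → Ω → ℝ) : Prop :=
  (∀ ω, B 0 ω = 0) ∧ (∀ ω, Continuous fun t => B t ω) ∧
  (∀ t, Measurable (B t)) ∧
  (∀ s t : ℝ, 0 ≤ s → s ≤ t →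
    P.map (fun ω => B t ω - B s ω) = ProbabilityTheory.gaussianReal 0 ((t - s).toNNReal)) ∧
  (∀ n : ℕ, ∀ t : Fin (n + 1) → ℝ, Monotone t → (∀ i, 0 ≤ t i) →
    ProbabilityTheory.iIndepFun
      (fun (i : Fin n) ω => B (t i.succ) ω - B (t i.castSucc) ω) P)

/-- Natural σ-algebra of the process `B` up to time `t`. -/
def naturalSigma {Ω : Type*} (B : ℝ → Ω → ℝ) (t : ℝ) : MeasurableSpace Ω :=
  ⨆ s ∈ Iic t, MeasurableSpace.comap (B s) inferInstance


section TruncatedApproximation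

variable {X : ℝ → ℝ} {c s : ℝ} {a : ℝ≥0∞}

namespace Cadlag

theorem isBounded_image_Icc (hX : Cadlag X) (a b : ℝ) : Bornology.IsBounded (X '' Icc a b) := by
  refine Bornology.isBounded_image_of_isLocallyBounded_of_isCompact isCompact_Icc fun t => ?_
  obtain ⟨l, hl⟩ := hX.2 t
  refine ⟨X ⁻¹' Metric.ball (X t) 1 ∪ X ⁻¹' Metric.ball l 1, ?_, ?_⟩
  · rw [← nhdsLT_sup_nhdsGE, mem_sup]
    exact ⟨mem_of_superset (hl (Metric.ball_mem_nhds _ one_pos)) subset_union_right,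
      mem_of_superset (hX.1 t (Metric.ball_mem_nhds _ one_pos)) subset_union_left⟩
  · rw [image_union]
    exact (Metric.isBounded_ball.subset (image_preimage_subset _ _)).union
      (Metric.isBounded_ball.subset (image_preimage_subset _ _))

theorem exists_Ico_abs_sub_lt (hX : Cadlag X) (t : ℝ) {ε : ℝ} (hε : 0 < ε) :
    ∃ u > t, ∀ x ∈ Ico t u, |X x - X t| < ε := by
  obtain ⟨u, hu, hsub⟩ :=
    mem_nhdsGE_iff_exists_Ico_subset.mp (hX.1 t (Metric.ball_mem_nhds _ hε))
  exact ⟨u, hu, fun x hx => hsub hx⟩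

theorem exists_Ioo_abs_sub_lt (hX : Cadlag X) (t : ℝ) {ε : ℝ} (hε : 0 < ε) :
    ∃ v < t, ∀ p ∈ Ioo v t, ∀ q ∈ Ioo v t, |X p - X q| < ε := by
  obtain ⟨l, hl⟩ := hX.2 t
  obtain ⟨S, hS, hSε⟩ := (Metric.cauchy_iff.mp hl.cauchy_map).2 ε hε
  obtain ⟨v, hv, hsub⟩ := mem_nhdsLT_iff_exists_Ioo_subset.mp hS
  exact ⟨v, hv, fun p hp q hq => hSε _ (hsub hp) _ (hsub hq)⟩

end Cadlag

theorem le_supOn (hX : Cadlag X) {a b x : ℝ} (hx : x ∈ Icc a b) : X x ≤ supOn X a b :=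
  le_csSup (hX.isBounded_image_Icc a b).bddAbove (mem_image_of_mem X hx)

theorem infOn_le (hX : Cadlag X) {a b x : ℝ} (hx : x ∈ Icc a b) : infOn X a b ≤ X x :=
  csInf_le (hX.isBounded_image_Icc a b).bddBelow (mem_image_of_mem X hx)

theorem le_infOn {a b M : ℝ} (hab : a ≤ b) (h : ∀ x ∈ Icc a b, M ≤ X x) :
    M ≤ infOn X a b :=
  le_csInf ((nonempty_Icc.mpr hab).image X) (forall_mem_image.mpr h)

theorem abs_sub_le_of_lt_TuZero (hX : Cadlag X) (hs : 0 ≤ s) (hu : ENNReal.ofReal s < TuZero X c)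
    (hd : ENNReal.ofReal s < TdIni X c) : |X s - X 0| ≤ c := by
  have hrise : supOn X 0 s - X 0 ≤ c := not_lt.mp fun h => hu.not_ge (sInf_le ⟨s, hs, rfl, h⟩)
  have hdrop : X 0 - infOn X 0 s ≤ c := not_lt.mp fun h => hd.not_ge (sInf_le ⟨s, hs, rfl, h⟩)
  have hle := le_supOn hX ⟨hs, le_rfl⟩
  have hge := infOn_le hX ⟨hs, le_rfl⟩
  rw [abs_le]
  constructor <;> linarith

theorem abs_sub_le_of_lt_nextTd (hX : Cadlag X) (hs : 0 ≤ s) (ha : a ≤ ENNReal.ofReal s)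
    (h : ENNReal.ofReal s < nextTd X c a) : |X s - (supOn X a.toReal s - c)| ≤ c := by
  have hdrop : supOn X a.toReal s - X s ≤ 2 * c :=
    not_lt.mp fun hgt => h.not_ge (sInf_le ⟨s, hs, ha, rfl, hgt⟩)
  have hle := le_supOn hX ⟨ENNReal.toReal_le_of_le_ofReal hs ha, le_rfl⟩
  rw [abs_le]
  constructor <;> linarith

theorem abs_sub_le_of_lt_nextTu (hX : Cadlag X) (hs : 0 ≤ s) (ha : a ≤ ENNReal.ofReal s)
    (h : ENNReal.ofReal s < nextTu X c a) : |X s - (infOn X a.toReal s + c)| ≤ c := by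
  have hrise : X s - infOn X a.toReal s ≤ 2 * c :=
    not_lt.mp fun hgt => h.not_ge (sInf_le ⟨s, hs, ha, rfl, hgt⟩)
  have hge := infOn_le hX ⟨ENNReal.toReal_le_of_le_ofReal hs ha, le_rfl⟩
  rw [abs_le]
  constructor <;> linarith

theorem Td_eq_nextTd (X : ℝ → ℝ) (c : ℝ) (k : ℕ) : Td X c k = nextTd X c (Tu X c k) := by
  cases k <;> rfl

theorem Tu_succ_eq_nextTu (X : ℝ → ℝ) (c : ℝ) (k : ℕ) :
    Tu X c (k + 1) = nextTu X c (Td X c k) :=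
  rfl

theorem le_nextTu (X : ℝ → ℝ) (c : ℝ) (a : ℝ≥0∞) : a ≤ nextTu X c a :=
  le_sInf fun _ ⟨_, _, has, hu, _⟩ => hu ▸ has

theorem lt_nextTu (hX : Cadlag X) (hc : 0 < c) (ha : a ≠ ⊤) : a < nextTu X c a := by
  obtain ⟨u, hu, hosc⟩ := hX.exists_Ico_abs_sub_lt a.toReal hc
  have hu_le : ENNReal.ofReal u ≤ nextTu X c a := by
    refine le_sInf ?_
    rintro _ ⟨s, hs, has, rfl, hrise⟩
    refine not_lt.mp fun hsu => hrise.not_ge ?_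
    have hsu : s < u := (ENNReal.ofReal_lt_ofReal_iff_of_nonneg hs).mp hsu
    have has : a.toReal ≤ s := ENNReal.toReal_le_of_le_ofReal hs has
    have hinf : X a.toReal - c ≤ infOn X a.toReal s :=
      le_infOn has fun x hx => by
        linarith [(abs_lt.mp (hosc x ⟨hx.1, hx.2.trans_lt hsu⟩)).1]
    linarith [(abs_lt.mp (hosc s ⟨has, hsu⟩)).2]
  calc a = ENNReal.ofReal a.toReal := (ENNReal.ofReal_toReal ha).symm
    _ < ENNReal.ofReal u :=
      (ENNReal.ofReal_lt_ofReal_iff (ENNReal.toReal_nonneg.trans_lt hu)).mpr hu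
    _ ≤ nextTu X c a := hu_le

theorem exists_drop_of_nextTd_lt {t : ℝ} (h : nextTd X c a < ENNReal.ofReal t) :
    ∃ p q, a.toReal ≤ p ∧ p ≤ q ∧ q < t ∧ 2 * c < X p - X q := by
  obtain ⟨_, ⟨q, hq, haq, rfl, hdrop⟩, hqt⟩ := sInf_lt_iff.mp h
  have haq : a.toReal ≤ q := ENNReal.toReal_le_of_le_ofReal hq haq
  obtain ⟨_, ⟨p, hp, rfl⟩, hpq⟩ :=
    exists_lt_of_lt_csSup ((nonempty_Icc.mpr haq).image X)
      (show X q + 2 * c < supOn X a.toReal q by linarith)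
  exact ⟨p, q, hp.1, hp.2, (ENNReal.ofReal_lt_ofReal_iff_of_nonneg hq).mp hqt, by linarith⟩

theorem exists_ofReal_lt_Tu (hX : Cadlag X) (hc : 0 < c) (s : ℝ) :
    ∃ k, ENNReal.ofReal s < Tu X c k := by
  by_contra! h
  have hTu_ne_top (k : ℕ) : Tu X c k ≠ ⊤ := ne_top_of_le_ne_top ENNReal.ofReal_ne_top (h k)
  have hTd_lt (k : ℕ) : Td X c k < Tu X c (k + 1) :=
    Tu_succ_eq_nextTu X c k ▸
      lt_nextTu hX hc (ne_top_of_le_ne_top (hTu_ne_top (k + 1)) (le_nextTu X c _))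
  have hbdd : BddAbove (range fun k => (Tu X c k).toReal) :=
    ⟨(ENNReal.ofReal s).toReal,
      forall_mem_range.mpr fun k => ENNReal.toReal_mono ENNReal.ofReal_ne_top (h k)⟩
  set t := ⨆ k, (Tu X c k).toReal
  have hTu_le (k : ℕ) : Tu X c k ≤ ENNReal.ofReal t := by
    rw [← ENNReal.ofReal_toReal (hTu_ne_top k)]
    exact ENNReal.ofReal_le_ofReal (le_ciSup hbdd k)
  obtain ⟨v, hvt, hosc⟩ := hX.exists_Ioo_abs_sub_lt t (by positivity : 0 < 2 * c)
  obtain ⟨k, hvk⟩ := exists_lt_of_lt_ciSup hvt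
  obtain ⟨p, q, hkp, hpq, hqt, hdrop⟩ := exists_drop_of_nextTd_lt
    (Td_eq_nextTd X c k ▸ (hTd_lt k).trans_le (hTu_le (k + 1)))
  have hpq_close := hosc p ⟨hvk.trans_le hkp, hpq.trans_lt hqt⟩ q
    ⟨hvk.trans_le (hkp.trans hpq), hqt⟩
  linarith [le_abs_self (X p - X q)]

end TruncatedApproximation

/-- the construction `X^c` uniformly approximates `X`:
`|X(s) − X^c(s)| ≤ c` for all `s ≥ 0`. -/
theorem stmt_2 (X : ℝ → ℝ) (hX : Cadlag X) (c : ℝ) (hc : 0 < c)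
    (hud : Tu X c 0 ≤ TdIni X c) :
    ∀ s : ℝ, 0 ≤ s → |X s - Xc X c s| ≤ c := by
  intro s hs
  unfold Xc
  split_ifs with hu hup hdown
  · exact abs_sub_le_of_lt_TuZero hX hs hu (hu.trans_le hud)
  · obtain ⟨hk, hk'⟩ := Nat.find_spec hup
    exact abs_sub_le_of_lt_nextTd hX hs hk (Td_eq_nextTd X c _ ▸ hk')
  · obtain ⟨hk, hk'⟩ := Nat.find_spec hdown
    exact abs_sub_le_of_lt_nextTu hX hs hk (Tu_succ_eq_nextTu X c _ ▸ hk')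
  · have hTu_le (k : ℕ) : Tu X c k ≤ ENNReal.ofReal s := by
      induction k with
      | zero => exact not_lt.mp hu
      | succ k ih =>
        exact not_lt.mp fun hlt => hdown ⟨k, not_lt.mp fun hTd => hup ⟨k, ih, hTd⟩, hlt⟩
    obtain ⟨k, hk⟩ := exists_ofReal_lt_Tu hX hc s
    exact absurd (hTu_le k) hk.not_ge

end
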